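/- Let m > 0 and 0 < ψ < 1, and let f : ℝ → ℝ be bounded and measurable. Then the solution y of the Stein equation with h = f satisfies the perturbation bound sup_{x∈ℝ} | x · (ψ(m+1)/(m+x²)) · y(x) | ≤ 2ψ(1−ψ)⁻¹(1 + 1/m)·‖f‖_∞; i.e., with (U y)(x) := −x·(ψ(m+1)/(m+x²))·y(x), one has ‖U y‖_∞ ≤ 2ψ(1−ψ)⁻¹(1 + 1/m)·‖f‖_∞. -/

import Mathlib

/-!
With `a = 1 - ψ`, the integrand `g t = e^{-a t²/2} (f t - h̄_ψ)` is dominated by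
`2C e^{-a t²/2}` and has total integral zero, so the tail integral defining `y(x)` may be
taken over the side of `x` away from the origin. There the Mills-ratio estimate
`∫_{|x|}^∞ e^{-a t²/2} dt ≤ e^{-a x²/2} / (a |x|)` gives `|x y(x)| ≤ 2C / a`, and it remains
to bound `ψ (m + 1) / (m + x²)` by `ψ (1 + 1/m)`.
-/

open MeasureTheory ProbabilityTheory Real Set

noncomputable section

/-- `h̄_ψ = E h(N)` for `N ~ N(0, (1-ψ)⁻¹)`. -/
def gaussMean (ψ : ℝ) (h : ℝ → ℝ) : ℝ :=
  ∫ x, h x ∂(gaussianReal 0 (Real.toNNReal (1 - ψ)⁻¹))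

/-- The bounded solution `y` of the Stein equation
`y'(x) - (1-ψ) x y(x) = h(x) - h̄_ψ`, given explicitly by
`y(x) = -e^{(1-ψ)x²/2} ∫_x^∞ e^{-(1-ψ)t²/2} (h(t) - h̄_ψ) dt`. -/
def steinSol (ψ : ℝ) (h : ℝ → ℝ) (x : ℝ) : ℝ :=
  - Real.exp ((1 - ψ) * x ^ 2 / 2) *
      ∫ t in Set.Ioi x, Real.exp (-((1 - ψ) * t ^ 2 / 2)) * (h t - gaussMean ψ h)

open Filter Topology
open scoped NNReal

section GaussianTail

variable {a x D : ℝ} {g : ℝ → ℝ}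

lemma hasDerivAt_neg_exp_neg_mul_sq_div_two_div (ha : a ≠ 0) (t : ℝ) :
    HasDerivAt (fun t ↦ -exp (-(a * t ^ 2 / 2)) / a) (t * exp (-(a * t ^ 2 / 2))) t :=
  ((((hasDerivAt_pow 2 t).const_mul a).div_const 2).fun_neg.exp.fun_neg.div_const a).congr_deriv
    (by field_simp; ring)

lemma tendsto_neg_exp_neg_mul_sq_div_two_div_atTop (ha : 0 < a) :
    Tendsto (fun t ↦ -exp (-(a * t ^ 2 / 2)) / a) atTop (𝓝 0) := by
  have h : Tendsto (fun t : ℝ ↦ -(a * t ^ 2 / 2)) atTop atBot :=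
    tendsto_neg_atTop_atBot.comp
      (((tendsto_pow_atTop two_ne_zero).const_mul_atTop ha).atTop_div_const two_pos)
  simpa using ((tendsto_exp_atBot.comp h).neg).div_const a

lemma integrableOn_Ioi_mul_exp_neg_mul_sq_div_two (ha : 0 < a) (hx : 0 ≤ x) :
    IntegrableOn (fun t ↦ t * exp (-(a * t ^ 2 / 2))) (Ioi x) :=
  integrableOn_Ioi_deriv_of_nonneg' (fun t _ ↦ hasDerivAt_neg_exp_neg_mul_sq_div_two_div ha.ne' t)
    (fun _ ht ↦ mul_nonneg (hx.trans ht.le) (exp_pos _).le)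
    (tendsto_neg_exp_neg_mul_sq_div_two_div_atTop ha)

lemma integral_Ioi_mul_exp_neg_mul_sq_div_two (ha : 0 < a) (hx : 0 ≤ x) :
    ∫ t in Ioi x, t * exp (-(a * t ^ 2 / 2)) = exp (-(a * x ^ 2 / 2)) / a := by
  rw [integral_Ioi_of_hasDerivAt_of_nonneg'
    (fun t _ ↦ hasDerivAt_neg_exp_neg_mul_sq_div_two_div ha.ne' t)
    (fun _ ht ↦ mul_nonneg (hx.trans ht.le) (exp_pos _).le)
    (tendsto_neg_exp_neg_mul_sq_div_two_div_atTop ha)]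
  ring

/-- Mills-ratio bound: on `(x, ∞)` the weight `t / x ≥ 1` makes the Gaussian integrable in closed
form. -/
lemma abs_setIntegral_Ioi_le_of_abs_le_exp (ha : 0 < a) (hx : 0 < x) (hD : 0 ≤ D)
    (hg : IntegrableOn g (Ioi x)) (hbound : ∀ t, x < t → |g t| ≤ D * exp (-(a * t ^ 2 / 2))) :
    |∫ t in Ioi x, g t| ≤ D * exp (-(a * x ^ 2 / 2)) / (a * x) := by
  have hmono : ∀ t ∈ Ioi x, |g t| ≤ D / x * (t * exp (-(a * t ^ 2 / 2))) := fun t ht ↦ by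
    refine (hbound t ht).trans ?_
    rw [div_mul_eq_mul_div, le_div_iff₀ hx]
    have := mul_le_mul_of_nonneg_left ht.le (mul_nonneg hD (exp_pos (-(a * t ^ 2 / 2))).le)
    linarith
  calc |∫ t in Ioi x, g t| ≤ ∫ t in Ioi x, |g t| := abs_integral_le_integral_abs
    _ ≤ ∫ t in Ioi x, D / x * (t * exp (-(a * t ^ 2 / 2))) :=
      setIntegral_mono_on hg.abs
        ((integrableOn_Ioi_mul_exp_neg_mul_sq_div_two ha hx.le).const_mul _) measurableSet_Ioi hmono
    _ = D * exp (-(a * x ^ 2 / 2)) / (a * x) := by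
      rw [integral_const_mul, integral_Ioi_mul_exp_neg_mul_sq_div_two ha hx.le]
      field_simp

/-- For `x < 0` the vanishing total integral turns the tail `(x, ∞)` into the tail `(-∞, x)`,
which reflection brings back to the case `x > 0`. -/
lemma abs_setIntegral_Ioi_le_of_integral_eq_zero (ha : 0 < a) (hx : x ≠ 0) (hD : 0 ≤ D)
    (hg : Integrable g) (hg0 : ∫ t, g t = 0)
    (hbound : ∀ t, |g t| ≤ D * exp (-(a * t ^ 2 / 2))) :
    |∫ t in Ioi x, g t| ≤ D * exp (-(a * x ^ 2 / 2)) / (a * |x|) := by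
  rcases hx.lt_or_gt with hneg | hpos
  · have hsplit := intervalIntegral.integral_Iic_add_Ioi hg.integrableOn hg.integrableOn (b := x)
    have hreflect : ∫ t in Ioi (-x), g (-t) = ∫ t in Iic x, g t := by
      simp [integral_comp_neg_Ioi (-x) g]
    have h := abs_setIntegral_Ioi_le_of_abs_le_exp ha (neg_pos.mpr hneg) hD hg.comp_neg.integrableOn
      (fun t _ ↦ by simpa [neg_sq] using hbound (-t))
    rw [hreflect, neg_sq] at h
    rw [abs_of_neg hneg, show ∫ t in Ioi x, g t = -∫ t in Iic x, g t by linarith, abs_neg]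
    exact h
  · rw [abs_of_pos hpos]
    exact abs_setIntegral_Ioi_le_of_abs_le_exp ha hpos hD hg.integrableOn fun t _ ↦ hbound t

end GaussianTail

lemma integral_gaussianPDFReal_mul_sub_integral_gaussianReal {μ : ℝ} {v : ℝ≥0} (hv : v ≠ 0)
    {h : ℝ → ℝ} (hh : Integrable h (gaussianReal μ v)) :
    ∫ t, gaussianPDFReal μ v t * (h t - ∫ x, h x ∂gaussianReal μ v) = 0 := by
  have hpdf : Integrable (fun t ↦ gaussianPDFReal μ v t * h t) := by
    rw [gaussianReal_of_var_ne_zero μ hv, integrable_withDensity_iff_integrable_smul'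
      (measurable_gaussianPDF μ v) (ae_of_all _ fun _ ↦ gaussianPDF_lt_top)] at hh
    simpa [toReal_gaussianPDF] using hh
  simp_rw [mul_sub]
  rw [integral_sub hpdf ((integrable_gaussianPDFReal μ v).mul_const _), integral_mul_const,
    integral_gaussianPDFReal_eq_one μ hv, integral_gaussianReal_eq_integral_smul hv]
  simp

lemma exp_neg_mul_sq_div_two_eq_mul_gaussianPDFReal {a : ℝ} (ha : 0 < a) (t : ℝ) :
    exp (-(a * t ^ 2 / 2)) = √(2 * π * a⁻¹) * gaussianPDFReal 0 a⁻¹.toNNReal t := by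
  have hK : √(2 * π * a⁻¹) ≠ 0 := (sqrt_pos.mpr (by positivity)).ne'
  rw [gaussianPDFReal, Real.coe_toNNReal _ (inv_pos.mpr ha).le, ← mul_assoc, mul_inv_cancel₀ hK,
    one_mul]
  congr 1
  field_simp
  ring

section Stein

variable {ψ : ℝ} {h : ℝ → ℝ}

lemma integral_exp_mul_sub_gaussMean (hψ : ψ < 1)
    (hh : Integrable h (gaussianReal 0 (1 - ψ)⁻¹.toNNReal)) :
    ∫ t, exp (-((1 - ψ) * t ^ 2 / 2)) * (h t - gaussMean ψ h) = 0 := by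
  have ha : 0 < 1 - ψ := sub_pos.mpr hψ
  have hv : (1 - ψ)⁻¹.toNNReal ≠ 0 := by simpa using ha
  simp_rw [exp_neg_mul_sq_div_two_eq_mul_gaussianPDFReal ha, mul_assoc]
  rw [integral_const_mul, gaussMean, integral_gaussianPDFReal_mul_sub_integral_gaussianReal hv hh,
    mul_zero]

lemma abs_gaussMean_le {C : ℝ} (hC : ∀ x, |h x| ≤ C) : |gaussMean ψ h| ≤ C := by
  unfold gaussMean
  simpa using norm_integral_le_of_norm_le_const (μ := gaussianReal 0 (1 - ψ)⁻¹.toNNReal)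
    (ae_of_all _ fun x ↦ (norm_eq_abs _).trans_le (hC x))

lemma abs_mul_steinSol_le (hψ : ψ < 1) (hmeas : Measurable h) {C : ℝ} (hC : ∀ x, |h x| ≤ C)
    (x : ℝ) : |x * steinSol ψ h x| ≤ 2 * C / (1 - ψ) := by
  have ha : 0 < 1 - ψ := sub_pos.mpr hψ
  have hC0 : 0 ≤ C := (abs_nonneg _).trans (hC 0)
  rcases eq_or_ne x 0 with rfl | hx
  · simp only [zero_mul, abs_zero]; positivity
  set g := fun t ↦ exp (-((1 - ψ) * t ^ 2 / 2)) * (h t - gaussMean ψ h)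
  have hbound : ∀ t, |g t| ≤ 2 * C * exp (-((1 - ψ) * t ^ 2 / 2)) := fun t ↦ by
    have hdiff := (abs_sub _ _).trans (add_le_add (hC t) (abs_gaussMean_le (ψ := ψ) hC))
    rw [abs_mul, abs_of_pos (exp_pos _), mul_comm]
    exact mul_le_mul_of_nonneg_right (by linarith) (exp_pos _).le
  have hg : Integrable g := by
    refine Integrable.mono'
      ((integrable_exp_neg_mul_sq (b := (1 - ψ) / 2) (by positivity)).const_mul (2 * C))
      (by fun_prop : Measurable g).aestronglyMeasurable (ae_of_all _ fun t ↦ ?_)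
    simpa [neg_div, mul_div_right_comm] using hbound t
  have hg0 : ∫ t, g t = 0 := integral_exp_mul_sub_gaussMean hψ
    (Integrable.of_bound hmeas.aestronglyMeasurable C (ae_of_all _ hC))
  have htail := abs_setIntegral_Ioi_le_of_integral_eq_zero ha hx (by positivity) hg hg0 hbound
  have hexp : exp ((1 - ψ) * x ^ 2 / 2) * exp (-((1 - ψ) * x ^ 2 / 2)) = 1 := by
    rw [← exp_add, add_neg_cancel, exp_zero]
  calc |x * steinSol ψ h x| = |x| * exp ((1 - ψ) * x ^ 2 / 2) * |∫ t in Ioi x, g t| := by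
        rw [steinSol, abs_mul, abs_mul, abs_neg, abs_of_pos (exp_pos _), mul_assoc]
    _ ≤ |x| * exp ((1 - ψ) * x ^ 2 / 2) *
          (2 * C * exp (-((1 - ψ) * x ^ 2 / 2)) / ((1 - ψ) * |x|)) := by gcongr
    _ = 2 * C / (1 - ψ) := by
      have : |x| ≠ 0 := abs_ne_zero.mpr hx
      field_simp
      linear_combination C * hexp

end Stein

theorem stmt16 (m ψ : ℝ) (hm : 0 < m) (hψ0 : 0 < ψ) (hψ1 : ψ < 1)
    (f : ℝ → ℝ) (hmeas : Measurable f) (C : ℝ) (hC : ∀ x, |f x| ≤ C) :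
    ∀ x : ℝ,
      |x * (ψ * (m + 1) / (m + x ^ 2)) * steinSol ψ f x|
        ≤ 2 * ψ / (1 - ψ) * (1 + 1 / m) * C := by
  intro x
  have hcoef_pos : 0 < ψ * (m + 1) / (m + x ^ 2) := by positivity
  have hcoef : ψ * (m + 1) / (m + x ^ 2) ≤ ψ * (1 + 1 / m) := by
    rw [div_le_iff₀ (by positivity)]
    field_simp
    nlinarith [sq_nonneg x, mul_pos hψ0 (add_pos hm one_pos)]
  calc |x * (ψ * (m + 1) / (m + x ^ 2)) * steinSol ψ f x|
      = ψ * (m + 1) / (m + x ^ 2) * |x * steinSol ψ f x| := by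
        rw [mul_right_comm, abs_mul, abs_of_pos hcoef_pos, mul_comm]
    _ ≤ ψ * (1 + 1 / m) * (2 * C / (1 - ψ)) :=
        mul_le_mul hcoef (abs_mul_steinSol_le hψ1 hmeas hC x) (abs_nonneg _)
          (hcoef_pos.le.trans hcoef)
    _ = 2 * ψ / (1 - ψ) * (1 + 1 / m) * C := by ring

end
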